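/- arXiv:2602.17328 — 6 statements merged into one kernel-verified Lean document; each statement's English description precedes it below -/
import Mathlib

section
/- Let R be a commutative ring viewed inside S_n(J_n,R) via scalar matrices. Then the ring extension S_n(J_n,R)/R is a Frobenius extension: there exist an R-R-bimodule homomorphism E : S_n(J_n,R) → R and elements X_0,…,X_{n-1}, Y_0,…,Y_{n-1} ∈ S_n(J_n,R) such that ∑_i E(a X_i) Y_i = a = ∑_i X_i E(Y_i a) for all a. -/
/-!
The centralizer of the nilpotent Jordan block `J` is `R[J] ≅ R[x]/(xⁿ)`: a matrix commuting with `J`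
is determined by its first row, hence equals `∑ₖ a₀ₖ Jᵏ`. The functional `E(a) = a₀,ₙ₋₁`, the
coefficient of `Jⁿ⁻¹`, satisfies `E(a Jⁿ⁻¹⁻ⁱ) = a₀ᵢ`, so `(Jⁱ)` and `(Jⁿ⁻¹⁻ⁱ)` are dual bases for it.
-/

def jordanBlock (n : ℕ) (R : Type*) [CommRing R] : Matrix (Fin n) (Fin n) R :=
  Matrix.of fun i j => if (i : ℕ) + 1 = (j : ℕ) then 1 else 0

section

variable {R : Type*} [CommRing R]

theorem jordanBlock_pow_apply {n : ℕ} (k : ℕ) (i j : Fin n) :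
    (jordanBlock n R ^ k) i j = if (i : ℕ) + k = j then 1 else 0 := by
  induction k generalizing j with
  | zero => simp [Matrix.one_apply, Fin.ext_iff]
  | succ k ih =>
    rw [pow_succ, Matrix.mul_apply]
    by_cases h : (i : ℕ) + k < n
    · rw [Finset.sum_eq_single ⟨i + k, h⟩ (fun l _ hl => by simp [ih, Fin.ext_iff] at hl ⊢; omega)
        (by simp)]
      rw [ih, if_pos rfl, one_mul]
      simp [jordanBlock, add_assoc]
    · rw [Finset.sum_eq_zero (fun l _ => by simp [ih]; omega), if_neg (by omega)]

theorem jordanBlock_pow_mul_apply_zero {n : ℕ} [NeZero n] (M : Matrix (Fin n) (Fin n) R)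
    (i j : Fin n) : (jordanBlock n R ^ (i : ℕ) * M) 0 j = M i j := by
  simp [Matrix.mul_apply, jordanBlock_pow_apply, Fin.val_inj]

theorem ext_of_commute_jordanBlock {n : ℕ} [NeZero n] {a b : Matrix (Fin n) (Fin n) R}
    (ha : Commute (jordanBlock n R) a) (hb : Commute (jordanBlock n R) b)
    (h : ∀ j, a 0 j = b 0 j) : a = b := by
  -- row `i` of `M` is row `0` of `J ^ i * M = M * J ^ i`
  have row_eq {M : Matrix (Fin n) (Fin n) R} (hM : Commute (jordanBlock n R) M) (i j : Fin n) :
      M i j = ∑ k, M 0 k * (jordanBlock n R ^ (i : ℕ)) k j := by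
    rw [← jordanBlock_pow_mul_apply_zero M, (hM.pow_left _).eq, Matrix.mul_apply]
  ext i j
  rw [row_eq ha, row_eq hb]
  simp only [h]

theorem eq_sum_smul_jordanBlock_pow {n : ℕ} [NeZero n] {a : Matrix (Fin n) (Fin n) R}
    (ha : Commute (jordanBlock n R) a) : a = ∑ k : Fin n, a 0 k • jordanBlock n R ^ (k : ℕ) := by
  refine ext_of_commute_jordanBlock ha
    (Commute.sum_right _ _ _ fun k _ => ((Commute.refl _).pow_right _).smul_right _) fun j => ?_
  simp [Matrix.sum_apply, jordanBlock_pow_apply, Fin.val_inj]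

theorem mul_jordanBlock_pow_rev_apply_last {n : ℕ} (M : Matrix (Fin (n + 1)) (Fin (n + 1)) R)
    (p i : Fin (n + 1)) : (M * jordanBlock (n + 1) R ^ (i.rev : ℕ)) p (Fin.last n) = M p i := by
  rw [Matrix.mul_apply, Finset.sum_eq_single i (fun l _ hl => ?_) (by simp)]
  · simp [jordanBlock_pow_apply]; omega
  · simp [jordanBlock_pow_apply, Fin.ext_iff] at hl ⊢; omega

theorem jordanBlock_pow_mem_centralizer (n k : ℕ) :
    jordanBlock n R ^ k ∈ Subalgebra.centralizer R {jordanBlock n R} :=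
  Subalgebra.pow_mem _ (Subalgebra.mem_centralizer_iff R |>.mpr fun _ h => by rw [h]) k

end

/-- The extension `S_n(J_n,R)/R` is a Frobenius extension: there exist an `R`-`R`-bimodule
homomorphism `E : S_n(J_n,R) → R` (an `R`-linear map, since `R` is central) and elements
`X_0,…,X_{n-1}`, `Y_0,…,Y_{n-1}` with `∑ E(a X_i) Y_i = a = ∑ X_i E(Y_i a)` for all `a`. -/
theorem stmt_3 (R : Type*) [CommRing R] (n : ℕ) :
    ∃ (E : Subalgebra.centralizer R {jordanBlock n R} →ₗ[R] R)
      (X Y : Fin n → Subalgebra.centralizer R {jordanBlock n R}),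
      ∀ a : Subalgebra.centralizer R {jordanBlock n R},
        (∑ i : Fin n, E (a * X i) • Y i = a) ∧
        (∑ i : Fin n, E (Y i * a) • X i = a) := by
  obtain _ | m := n
  · exact ⟨0, 0, 0, fun a => ⟨Subsingleton.elim _ _, Subsingleton.elim _ _⟩⟩
  set J := jordanBlock (m + 1) R
  let P (k : ℕ) : Subalgebra.centralizer R {J} := ⟨J ^ k, jordanBlock_pow_mem_centralizer _ k⟩
  let E := Matrix.entryLinearMap R R 0 (Fin.last m) ∘ₗ
    (Subalgebra.centralizer R {J}).val.toLinearMap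
  refine ⟨E, fun i => P i, fun i => P i.rev, fun a => ?_⟩
  have ha : Commute J a := (Subalgebra.mem_centralizer_iff R).mp a.2 J rfl
  have hE (i : Fin (m + 1)) : E (a * P i.rev) = a.1 0 i := mul_jordanBlock_pow_rev_apply_last _ _ _
  have hsum : ∑ i : Fin (m + 1), a.1 0 i • P i = a :=
    Subtype.ext (by simpa [P] using (eq_sum_smul_jordanBlock_pow ha).symm)
  constructor
  · rw [← Equiv.sum_comp Fin.revPerm]
    simpa only [Fin.revPerm_apply, Fin.rev_rev, hE] using hsum
  · have hcomm (i : Fin (m + 1)) : P i.rev * a = a * P i.rev := Subtype.ext ((ha.pow_left _).eq)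
    simpa only [hcomm, hE] using hsum
end

section
/- Let A be a finite-dimensional algebra over a field R with a Frobenius system (E, X_l, Y_l) for A/R, and let K be a field extension of R. If (A ⊗_R K)/K is a separable Frobenius extension (i.e., there exists z ∈ A ⊗_R K with ∑_l (X_l ⊗ 1) z (Y_l ⊗ 1) = 1 ⊗ 1), then A/R is a separable Frobenius extension: there exists a ∈ A with ∑_l X_l a Y_l = 1_A. -/
open TensorProduct

/-- If `A` is a finite-dimensional algebra over a field `R` with Frobenius system
`(E, X_l, Y_l)`, `K/R` is a field extension, and `(A ⊗_R K)/K` is separable (there is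
`z ∈ A ⊗_R K` with `∑_l (X_l ⊗ 1) z (Y_l ⊗ 1) = 1 ⊗ 1`), then `A/R` is separable:
some `a ∈ A` satisfies `∑_l X_l a Y_l = 1`. -/
theorem stmt_12 (R K A : Type*) [Field R] [Field K] [Algebra R K]
    [Ring A] [Algebra R A] [FiniteDimensional R A] (m : ℕ)
    (E : A →ₗ[R] R) (X Y : Fin m → A)
    (hFrob : ∀ a : A,
      (∑ l : Fin m, E (a * X l) • Y l = a) ∧ (∑ l : Fin m, E (Y l * a) • X l = a))
    (hsep : ∃ z : A ⊗[R] K,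
      ∑ l : Fin m, (X l ⊗ₜ[R] (1 : K)) * z * (Y l ⊗ₜ[R] (1 : K)) =
        (1 : A) ⊗ₜ[R] (1 : K)) :
    ∃ a : A, ∑ l : Fin m, X l * a * Y l = 1 := by
  obtain ⟨z, hz⟩ := hsep
  -- a retraction g : K →ₗ[R] R with g 1 = 1
  obtain ⟨g, hg⟩ := (Algebra.linearMap R K).exists_leftInverse_of_injective
    (LinearMap.ker_eq_bot.mpr (algebraMap R K).injective)
  have hg1 : g 1 = 1 := by
    have := LinearMap.congr_fun hg 1
    simpa using this
  -- the map ψ : A ⊗ K → A, a ⊗ k ↦ g k • a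
  set ψ : A ⊗[R] K →ₗ[R] A :=
    TensorProduct.lift (((LinearMap.lsmul R A).comp g).flip) with hψ
  have hψtmul : ∀ (a : A) (k : K), ψ (a ⊗ₜ[R] k) = g k • a := fun a k => rfl
  have key : ∀ (x y : A) (w : A ⊗[R] K),
      ψ ((x ⊗ₜ[R] (1 : K)) * w * (y ⊗ₜ[R] (1 : K))) = x * ψ w * y := by
    intro x y w
    induction w using TensorProduct.induction_on with
    | zero => simp
    | tmul a k =>
        simp only [Algebra.TensorProduct.tmul_mul_tmul, one_mul, mul_one, hψtmul]
        rw [mul_smul_comm, smul_mul_assoc]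
    | add w₁ w₂ h₁ h₂ =>
        simp only [mul_add, add_mul, map_add, h₁, h₂]
  refine ⟨ψ z, ?_⟩
  have := congrArg ψ hz
  rw [map_sum] at this
  simp only [key] at this
  rw [this, hψtmul, hg1, one_smul]
end

section
/- Let R be a commutative ring and B an R-algebra such that B/R is a Frobenius extension with system (E, X_k, Y_k), k = 1,…,m. Then M_n(B)/R is a Frobenius extension with Frobenius homomorphism E′(b) = E(trace(b)) and dual bases X′ = X_k e_{i,j}, Y′ = Y_k e_{j,i} (indexed over all triples (i,j,k)). -/
/-!
Since `tr (b * e_{ij} x) = b_{ji} x` and `tr (e_{ji} y * b) = y b_{ij}`, for fixed `i, j` the sum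
over `k` is the dual-basis expansion in `B` of the entry `b_{ji}` (resp. `b_{ij}`) placed at that
position, and the matrix units then reassemble `b`.
-/

namespace Matrix

theorem sum_smul_single {R M ι ι' κ : Type*} [Semiring R] [AddCommMonoid M] [Module R M]
    [DecidableEq ι] [DecidableEq ι'] [Fintype κ] (i : ι) (j : ι') (c : κ → R) (y : κ → M) :
    ∑ k, c k • single i j (y k) = single i j (∑ k, c k • y k) := by
  simp only [← singleLinearMap_apply R, map_sum, map_smul]

variable {R B ι κ : Type*} [Semiring R] [NonUnitalNonAssocSemiring B] [Module R B]
  [Fintype ι] [DecidableEq ι] [Fintype κ]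

theorem sum_trace_mul_single_smul_single (E : B →ₗ[R] R) (X Y : κ → B)
    (hXY : ∀ x : B, ∑ k, E (x * X k) • Y k = x) (b : Matrix ι ι B) :
    ∑ i, ∑ j, ∑ k, E (trace (b * single i j (X k))) • single j i (Y k) = b :=
  calc ∑ i, ∑ j, ∑ k, E (trace (b * single i j (X k))) • single j i (Y k)
      = ∑ i, ∑ j, single j i (∑ k, E (b j i * X k) • Y k) := by
        simp only [trace_mul_single, MulOpposite.smul_eq_mul_unop, MulOpposite.unop_op,
          sum_smul_single]
    _ = ∑ j, ∑ i, single j i (b j i) := by simp only [hXY]; exact Finset.sum_comm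
    _ = b := (matrix_eq_sum_single b).symm

theorem sum_trace_single_mul_smul_single (E : B →ₗ[R] R) (X Y : κ → B)
    (hYX : ∀ x : B, ∑ k, E (Y k * x) • X k = x) (b : Matrix ι ι B) :
    ∑ i, ∑ j, ∑ k, E (trace (single j i (Y k) * b)) • single i j (X k) = b :=
  calc ∑ i, ∑ j, ∑ k, E (trace (single j i (Y k) * b)) • single i j (X k)
      = ∑ i, ∑ j, single i j (∑ k, E (Y k * b i j) • X k) := by
        simp only [trace_single_mul, smul_eq_mul, sum_smul_single]
    _ = ∑ i, ∑ j, single i j (b i j) := by simp only [hYX]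
    _ = b := (matrix_eq_sum_single b).symm

end Matrix

/-- If `B/R` is a Frobenius extension with system `(E, X_k, Y_k)`, then `M_n(B)/R` is a
Frobenius extension with Frobenius homomorphism `E′(b) = E(trace(b))` and dual bases
`X_k e_{i,j}`, `Y_k e_{j,i}` indexed over all triples `(i,j,k)`. -/
theorem stmt_13 (R B : Type*) [CommRing R] [Ring B] [Algebra R B] (n m : ℕ)
    (E : B →ₗ[R] R) (X Y : Fin m → B)
    (hFrob : ∀ b : B,
      (∑ k : Fin m, E (b * X k) • Y k = b) ∧ (∑ k : Fin m, E (Y k * b) • X k = b)) :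
    ∀ b : Matrix (Fin n) (Fin n) B,
      (∑ i : Fin n, ∑ j : Fin n, ∑ k : Fin m,
          E (Matrix.trace (b * Matrix.single i j (X k))) •
            Matrix.single j i (Y k) = b) ∧
      (∑ i : Fin n, ∑ j : Fin n, ∑ k : Fin m,
          E (Matrix.trace (Matrix.single j i (Y k) * b)) •
            Matrix.single i j (X k) = b) := fun b =>
  ⟨Matrix.sum_trace_mul_single_smul_single E X Y (fun x => (hFrob x).1) b,
    Matrix.sum_trace_single_mul_smul_single E X Y (fun x => (hFrob x).2) b⟩
end

section
/- Let R be a commutative ring with n invertible in R, and B an R-algebra such that B/R is a Frobenius extension with system (E, X_k, Y_k), k=1,…,m. If M_n(B)/R is a separable Frobenius extension (with the Frobenius system E′(b)=E(trace(b)), X_k e_{i,j}, Y_k e_{j,i}), then B/R is a separable Frobenius extension; more precisely, if d = ∑_{p,q} d_{(p,q)} e_{p,q} ∈ M_n(B) centralizes B and satisfies ∑_{i,j,k} X_k e_{i,j} d Y_k e_{j,i} = I, then ∑_k X_k (∑_j d_{(j,j)}) Y_k = 1_B with ∑_j d_{(j,j)} ∈ C_B(R). -/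
/-! Taking traces of `∑ (X_k e_{i,j}) d (Y_k e_{j,i}) = I` gives
`n • ∑_k X_k (tr d) Y_k = n • 1`, since the `(i,j,k)` summand has trace `X_k d_{j,j} Y_k`;
as `n` is a unit of `R`, it cancels. The centralizer condition holds because `R` acts centrally. -/

open Matrix

theorem Matrix.trace_single_mul_mul_single {ι α : Type*} [Fintype ι] [DecidableEq ι]
    [NonUnitalNonAssocSemiring α] (i j : ι) (a b : α) (M : Matrix ι ι α) :
    (single i j a * M * single j i b).trace = a * M j j * b := by
  rw [single_mul_mul_single, trace_single_eq_same]

theorem nsmul_left_cancel_of_isUnit_natCast {R A : Type*} [Semiring R] [AddCommMonoid A]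
    [Module R A] {n : ℕ} (hn : IsUnit (n : R)) {a b : A} (h : n • a = n • b) : a = b := by
  rw [← Nat.cast_smul_eq_nsmul R, ← Nat.cast_smul_eq_nsmul R] at h
  exact hn.smul_left_cancel.mp h

theorem stmt_14_general (R B : Type*) [CommRing R] [Ring B] [Algebra R B] (n m : ℕ)
    (hninv : IsUnit (n : R))
    (X Y : Fin m → B)
    (d : Matrix (Fin n) (Fin n) B)
    (hsep : ∑ i : Fin n, ∑ j : Fin n, ∑ k : Fin m,
        Matrix.single i j (X k) * d * Matrix.single j i (Y k) = 1) :
    (∑ k : Fin m, X k * (∑ j : Fin n, d j j) * Y k = 1) ∧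
    (∀ r : R, (∑ j : Fin n, d j j) * algebraMap R B r =
      algebraMap R B r * (∑ j : Fin n, d j j)) := by
  refine ⟨?_, fun r => (Algebra.commutes r _).symm⟩
  have htrace := congrArg Matrix.trace hsep
  simp only [trace_sum, trace_single_mul_mul_single, trace_one, Fintype.card_fin,
    Finset.sum_const, Finset.card_univ] at htrace
  have hsum : ∑ j : Fin n, ∑ k : Fin m, X k * d j j * Y k =
      ∑ k : Fin m, X k * (∑ j : Fin n, d j j) * Y k := by
    rw [Finset.sum_comm]
    simp only [Finset.mul_sum, Finset.sum_mul]
  rw [hsum, ← nsmul_one] at htrace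
  exact nsmul_left_cancel_of_isUnit_natCast hninv htrace

/-- Let `n` be invertible in `R` and let `B/R` be a Frobenius extension with system
`(E, X_k, Y_k)`. If `M_n(B)/R` is a separable Frobenius extension — i.e. there is
`d = ∑ d_{(p,q)} e_{p,q} ∈ M_n(B)` centralizing the scalar matrices `B·I` with
`∑_{i,j,k} (X_k e_{i,j}) d (Y_k e_{j,i}) = I` — then `B/R` is a separable Frobenius
extension: `∑_k X_k (∑_j d_{(j,j)}) Y_k = 1` with `∑_j d_{(j,j)} ∈ C_B(R)`. -/
theorem stmt_14 (R B : Type*) [CommRing R] [Ring B] [Algebra R B] (n m : ℕ)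
    (hninv : IsUnit (n : R))
    (E : B →ₗ[R] R) (X Y : Fin m → B)
    (hFrob : ∀ b : B,
      (∑ k : Fin m, E (b * X k) • Y k = b) ∧ (∑ k : Fin m, E (Y k * b) • X k = b))
    (d : Matrix (Fin n) (Fin n) B)
    (hd : ∀ b : B, d * (b • (1 : Matrix (Fin n) (Fin n) B)) =
          (b • (1 : Matrix (Fin n) (Fin n) B)) * d)
    (hsep : ∑ i : Fin n, ∑ j : Fin n, ∑ k : Fin m,
        Matrix.single i j (X k) * d * Matrix.single j i (Y k) = 1) :
    (∑ k : Fin m, X k * (∑ j : Fin n, d j j) * Y k = 1) ∧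
    (∀ r : R, (∑ j : Fin n, d j j) * algebraMap R B r =
      algebraMap R B r * (∑ j : Fin n, d j j)) :=
  stmt_14_general R B n m hninv X Y d hsep
end

section
/- Let R be a field of characteristic different from 2 and c ∈ M_2(R) any 2×2 matrix. Then the extension S_2(c,R)/R is a Frobenius extension. -/
/-!
A scalar `c` has all of `M₂(R)` as centralizer, which is Frobenius for the trace form, with the
matrix units `e_ij`, `e_ji` as dual bases. Otherwise the coordinates `(c₀₁, c₁₀, c₀₀ - c₁₁)` of `c`
modulo scalars are not all zero, and for `m` commuting with `c` the cross product of these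
coordinates with those of `m` consists of entries of `cm - mc`, so it vanishes: `m ≡ β c` modulo
scalars. Hence the centralizer is `R ⊕ R c`, and an algebra spanned by `1` and `x` is Frobenius for
any functional `E` with `E 1 = 0`, `E x = 1`.
-/

open Matrix

def IsFrobeniusExtension (R A : Type*) [CommSemiring R] [Semiring A] [Algebra R A] : Prop :=
  ∃ (m : ℕ) (E : A →ₗ[R] R) (X Y : Fin m → A), ∀ b : A,
    (∑ i : Fin m, E (b * X i) • Y i = b) ∧ (∑ i : Fin m, E (Y i * b) • X i = b)

namespace IsFrobeniusExtension

variable {R A B : Type*} [CommSemiring R] [Semiring A] [Algebra R A] [Semiring B] [Algebra R B]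

theorem of_fintype {ι : Type*} [Fintype ι] (E : A →ₗ[R] R) (X Y : ι → A)
    (h : ∀ b : A, (∑ i, E (b * X i) • Y i = b) ∧ (∑ i, E (Y i * b) • X i = b)) :
    IsFrobeniusExtension R A := by
  let e := (Fintype.equivFin ι).symm
  refine ⟨Fintype.card ι, E, X ∘ e, Y ∘ e, fun b => ?_⟩
  simp only [Function.comp_apply, e.sum_comp (fun i => E (b * X i) • Y i),
    e.sum_comp (fun i => E (Y i * b) • X i)]
  exact h b

theorem of_algEquiv (e : A ≃ₐ[R] B) (hA : IsFrobeniusExtension R A) :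
    IsFrobeniusExtension R B := by
  obtain ⟨m, E, X, Y, h⟩ := hA
  refine ⟨m, E ∘ₗ e.symm.toLinearMap, e ∘ X, e ∘ Y, fun b => ?_⟩
  obtain ⟨h₁, h₂⟩ := h (e.symm b)
  constructor
  · conv_rhs => rw [← e.apply_symm_apply b, ← h₁]
    simp
  · conv_rhs => rw [← e.apply_symm_apply b, ← h₂]
    simp

theorem centralizer_algebraMap (hA : IsFrobeniusExtension R A) (r : R) :
    IsFrobeniusExtension R (Subalgebra.centralizer R {algebraMap R A r}) := by
  have htop : Subalgebra.centralizer R {algebraMap R A r} = ⊤ :=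
    (Subalgebra.centralizer_eq_top_iff_subset R).mpr
      (Set.singleton_subset_iff.mpr (Subalgebra.algebraMap_mem _ r))
  exact hA.of_algEquiv (Subalgebra.topEquiv.symm.trans (Subalgebra.equivOfEq _ _ htop.symm))

end IsFrobeniusExtension

theorem IsFrobeniusExtension.of_forall_eq_smul_one_add_smul {R A : Type*} [CommRing R] [Ring A]
    [Algebra R A] (x : A) (E : A →ₗ[R] R) (hE₁ : E 1 = 0) (hEx : E x = 1)
    (hspan : ∀ b : A, ∃ α β : R, b = α • 1 + β • x) : IsFrobeniusExtension R A := by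
  -- `{x - E (x * x) • 1, 1}` is the basis dual to `{1, x}` for the pairing `(a, b) ↦ E (a * b)`.
  refine ⟨2, E, ![1, x], ![x - E (x * x) • 1, 1], fun b => ?_⟩
  obtain ⟨α, β, rfl⟩ := hspan b
  have hbx : (α • 1 + β • x) * x = α • x + β • (x * x) := by
    rw [add_mul, smul_mul_assoc, smul_mul_assoc, one_mul]
  have hxb : (x - E (x * x) • 1) * (α • 1 + β • x) =
      α • x + β • (x * x) - (E (x * x) * α) • 1 - (E (x * x) * β) • x := by
    rw [sub_mul, smul_mul_assoc, one_mul, mul_add, mul_smul_comm, mul_smul_comm, mul_one]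
    module
  constructor
  · simp only [Fin.sum_univ_two, cons_val_zero, cons_val_one, mul_one, hbx,
      map_add, map_smul, hE₁, hEx, smul_eq_mul]
    module
  · simp only [Fin.sum_univ_two, cons_val_zero, cons_val_one, one_mul, hxb,
      map_add, map_sub, map_smul, hE₁, hEx, smul_eq_mul]
    module

theorem isFrobeniusExtension_matrix (R n : Type*) [CommSemiring R] [Fintype n] [DecidableEq n] :
    IsFrobeniusExtension R (Matrix n n R) := by
  refine .of_fintype (traceLinearMap n R R) (fun p : n × n => single p.1 p.2 1)
    (fun p => single p.2 p.1 1) fun b => ⟨?_, ?_⟩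
  · simp only [traceLinearMap_apply, trace_mul_single, MulOpposite.op_one, one_smul, smul_single,
      smul_eq_mul, mul_one]
    rw [Fintype.sum_prod_type_right]
    exact (matrix_eq_sum_single b).symm
  · simp only [traceLinearMap_apply, trace_single_mul, smul_single, smul_eq_mul, mul_one, one_mul]
    rw [Fintype.sum_prod_type]
    exact (matrix_eq_sum_single b).symm

section TwoByTwo

variable {R : Type*} [CommRing R]

/-- The kernel is exactly the scalar matrices `R • 1`. -/
def offScalarCoords : Matrix (Fin 2) (Fin 2) R →ₗ[R] (Fin 3 → R) where
  toFun m := ![m 0 1, m 1 0, m 0 0 - m 1 1]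
  map_add' m m' := by ext i; fin_cases i <;> simp [sub_add_sub_comm]
  map_smul' r m := by ext i; fin_cases i <;> simp [mul_sub]

theorem offScalarCoords_apply (m : Matrix (Fin 2) (Fin 2) R) :
    offScalarCoords m = ![m 0 1, m 1 0, m 0 0 - m 1 1] :=
  rfl

theorem offScalarCoords_one : offScalarCoords (1 : Matrix (Fin 2) (Fin 2) R) = 0 := by
  ext i; fin_cases i <;> simp [offScalarCoords_apply]

theorem eq_smul_one_of_offScalarCoords_eq_zero {m : Matrix (Fin 2) (Fin 2) R}
    (h : offScalarCoords m = 0) : m = m 0 0 • 1 := by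
  simp only [offScalarCoords_apply, cons_eq_zero_iff, zero_empty, and_true, sub_eq_zero] at h
  obtain ⟨h01, h10, hd⟩ := h
  ext i j; fin_cases i <;> fin_cases j <;> simp [h01, h10, hd]

theorem cross_offScalarCoords_eq_zero_of_commute {c m : Matrix (Fin 2) (Fin 2) R}
    (h : Commute c m) : offScalarCoords c ⨯₃ offScalarCoords m = 0 := by
  have e : ∀ i j, (c * m) i j = (m * c) i j := fun i j => by rw [h.eq]
  have e00 := e 0 0
  have e01 := e 0 1
  have e10 := e 1 0
  simp only [mul_apply, Fin.sum_univ_two] at e00 e01 e10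
  simp only [offScalarCoords_apply, cross_apply, cons_val, cons_eq_zero_iff, zero_empty, and_true]
  exact ⟨by linear_combination e10, by linear_combination e01, by linear_combination e00⟩

end TwoByTwo

theorem exists_eq_smul_one_add_smul_of_commute {K : Type*} [Field K]
    {c m : Matrix (Fin 2) (Fin 2) K} (hc : offScalarCoords c ≠ 0) (h : Commute c m) :
    ∃ α β : K, m = α • 1 + β • c := by
  have hdep : ¬ LinearIndependent K ![offScalarCoords c, offScalarCoords m] := by
    rw [← crossProduct_ne_zero_iff_linearIndependent, not_not]
    exact cross_offScalarCoords_eq_zero_of_commute h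
  obtain ⟨β, hβ⟩ : ∃ β : K, β • offScalarCoords c = offScalarCoords m := by
    simpa [LinearIndependent.pair_iff' hc] using hdep
  have hscalar : offScalarCoords (m - β • c) = 0 := by
    rw [map_sub, map_smul, hβ, sub_self]
  exact ⟨(m - β • c) 0 0, β, by
    rw [← eq_smul_one_of_offScalarCoords_eq_zero hscalar, sub_add_cancel]⟩

theorem isFrobeniusExtension_centralizer_of_offScalarCoords_ne_zero {K : Type*} [Field K]
    {c : Matrix (Fin 2) (Fin 2) K} (hc : offScalarCoords c ≠ 0) :
    IsFrobeniusExtension K (Subalgebra.centralizer K {c}) := by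
  obtain ⟨k, hk⟩ : ∃ k, offScalarCoords c k ≠ 0 := Function.ne_iff.mp hc
  let S := Subalgebra.centralizer K {c}
  have mem_iff : ∀ m, m ∈ S ↔ Commute c m := fun m => by
    simp [S, Subalgebra.mem_centralizer_iff, Commute, SemiconjBy]
  refine .of_forall_eq_smul_one_add_smul (⟨c, (mem_iff c).mpr (.refl c)⟩ : S)
    ((offScalarCoords c k)⁻¹ • (LinearMap.proj k ∘ₗ offScalarCoords ∘ₗ S.val.toLinearMap))
    (by simp [offScalarCoords_one]) (by simp [inv_mul_cancel₀ hk]) ?_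
  rintro ⟨m, hm⟩
  obtain ⟨α, β, hαβ⟩ := exists_eq_smul_one_add_smul_of_commute hc ((mem_iff m).mp hm)
  exact ⟨α, β, Subtype.ext hαβ⟩

set_option synthInstance.maxHeartbeats 1000000 in
theorem stmt_16_general (R : Type*) [Field R]
    (c : Matrix (Fin 2) (Fin 2) R) :
    ∃ (m : ℕ) (E : Subalgebra.centralizer R {c} →ₗ[R] R)
      (X Y : Fin m → Subalgebra.centralizer R {c}),
      ∀ b : Subalgebra.centralizer R {c},
        (∑ i : Fin m, E (b * X i) • Y i = b) ∧
        (∑ i : Fin m, E (Y i * b) • X i = b) := by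
  by_cases hc : offScalarCoords c = 0
  · rw [eq_smul_one_of_offScalarCoords_eq_zero hc, ← Algebra.algebraMap_eq_smul_one]
    exact (isFrobeniusExtension_matrix R (Fin 2)).centralizer_algebraMap _
  · exact isFrobeniusExtension_centralizer_of_offScalarCoords_ne_zero hc

set_option synthInstance.maxHeartbeats 1000000 in
/-- Over a field of characteristic different from 2, for every `c ∈ M_2(R)` the extension
`S_2(c,R)/R` (the centralizer of `c` in `M_2(R)`) is a Frobenius extension. -/
theorem stmt_16 (R : Type*) [Field R] (hchar : (2 : R) ≠ 0)
    (c : Matrix (Fin 2) (Fin 2) R) :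
    ∃ (m : ℕ) (E : Subalgebra.centralizer R {c} →ₗ[R] R)
      (X Y : Fin m → Subalgebra.centralizer R {c}),
      ∀ b : Subalgebra.centralizer R {c},
        (∑ i : Fin m, E (b * X i) • Y i = b) ∧
        (∑ i : Fin m, E (Y i * b) • X i = b) :=
  stmt_16_general R c
end

section
/- Let R be a field and c ∈ M_n(R) a diagonalizable matrix (over R) with eigenvalues λ_1,…,λ_k of multiplicities m_1,…,m_k. Then S_n(c,R) ≅ M_{m_1}(R) × ⋯ × M_{m_k}(R), and S_n(c,R)/R is a separable Frobenius extension. -/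
/-!
Conjugating by the diagonalizing matrix and reordering the basis so that equal eigenvalues
become adjacent turns `c` into the block-scalar matrix `diag(λ₁ I_{m₁}, …, λ_k I_{m_k})`. As the
`λᵢ` are distinct, a matrix commutes with it exactly when it is block diagonal, so the
centralizer is `∏ᵢ M_{mᵢ}(R)`. Each `M_m(R)` is Frobenius over `R` with the trace form and the
dual bases `E_pq`, `E_qp`, and it is separable because `∑_{p,q} E_pq e E_qp = tr(e) • 1`, so any
`e` of trace one (such as `E_11`) works. These data are assembled blockwise and transported
along the isomorphism.
-/

open Matrix

/-- `E` is a Frobenius form of `A` over `R` with dual bases `X`, `Y`, and `e` is a separability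
element; the condition `e ∈ C_A(R)` holds automatically since `R` is central. -/
structure IsSeparableFrobeniusBasis {R A ι : Type*} [CommSemiring R] [Semiring A] [Algebra R A]
    [Fintype ι] (E : A →ₗ[R] R) (X Y : ι → A) (e : A) : Prop where
  sum_left : ∀ b, ∑ i, E (b * X i) • Y i = b
  sum_right : ∀ b, ∑ i, E (Y i * b) • X i = b
  sum_mul_mul : ∑ i, X i * e * Y i = 1

namespace IsSeparableFrobeniusBasis

section

variable {R A B ι κ : Type*} [CommSemiring R] [Semiring A] [Algebra R A] [Semiring B] [Algebra R B]
  [Fintype ι] [Fintype κ] {E : B →ₗ[R] R} {X Y : ι → B} {e : B}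

theorem reindex (h : IsSeparableFrobeniusBasis E X Y e) (σ : κ ≃ ι) :
    IsSeparableFrobeniusBasis E (X ∘ σ) (Y ∘ σ) e where
  sum_left b := (σ.sum_comp fun i => E (b * X i) • Y i).trans (h.sum_left b)
  sum_right b := (σ.sum_comp fun i => E (Y i * b) • X i).trans (h.sum_right b)
  sum_mul_mul := (σ.sum_comp fun i => X i * e * Y i).trans h.sum_mul_mul

theorem comap (h : IsSeparableFrobeniusBasis E X Y e) (φ : A ≃ₐ[R] B) :
    IsSeparableFrobeniusBasis (E ∘ₗ φ.toLinearMap) (φ.symm ∘ X) (φ.symm ∘ Y) (φ.symm e) where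
  sum_left b := φ.injective <| by simpa using h.sum_left (φ b)
  sum_right b := φ.injective <| by simpa using h.sum_right (φ b)
  sum_mul_mul := φ.injective <| by simpa using h.sum_mul_mul

end

theorem pi {R ι : Type*} [CommSemiring R] [Fintype ι] [DecidableEq ι] {A : ι → Type*}
    [∀ i, Semiring (A i)] [∀ i, Algebra R (A i)] {κ : ι → Type*} [∀ i, Fintype (κ i)]
    {E : ∀ i, A i →ₗ[R] R} {X Y : ∀ i, κ i → A i}
    {e : ∀ i, A i} (h : ∀ i, IsSeparableFrobeniusBasis (E i) (X i) (Y i) (e i)) :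
    IsSeparableFrobeniusBasis (∑ i, E i ∘ₗ LinearMap.proj i)
      (fun x : Σ i, κ i => Pi.single x.1 (X x.1 x.2)) (fun x => Pi.single x.1 (Y x.1 x.2)) e := by
  have hE : ∀ i (a : A i), (∑ j, E j ∘ₗ LinearMap.proj j) (Pi.single i a) = E i a := by
    intro i a
    rw [LinearMap.sum_apply, Finset.sum_eq_single i] <;> simp +contextual [Pi.single_eq_of_ne]
  have hsingle : ∀ i (f : κ i → A i), ∑ a, Pi.single i (f a) = Pi.single (M := A) i (∑ a, f a) :=
    fun i f => (map_sum (AddMonoidHom.single A i) f _).symm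
  refine ⟨fun b => ?_, fun b => ?_, ?_⟩
  · simp only [Fintype.sum_sigma, ← Pi.single_mul_right, hE, ← Pi.single_smul, hsingle,
      (h _).sum_left, Finset.univ_sum_single]
  · simp only [Fintype.sum_sigma, ← Pi.single_mul_left, hE, ← Pi.single_smul, hsingle,
      (h _).sum_right, Finset.univ_sum_single]
  · have hmul : ∀ i (x y : A i), Pi.single i x * e * Pi.single i y = Pi.single i (x * e i * y) :=
      fun i x y => by rw [← Pi.single_mul_left, ← Pi.single_mul]
    simp only [Fintype.sum_sigma, hmul, hsingle, (h _).sum_mul_mul, Finset.univ_sum_single]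
    rfl

end IsSeparableFrobeniusBasis

namespace Matrix

variable {R n : Type*} [CommSemiring R] [Fintype n] [DecidableEq n]

theorem sum_single_mul_mul_single (M : Matrix n n R) :
    ∑ x : n × n, single x.1 x.2 (1 : R) * M * single x.2 x.1 1 = M.trace • 1 := by
  calc ∑ x : n × n, single x.1 x.2 (1 : R) * M * single x.2 x.1 1
      = ∑ p, ∑ q, single p p (M q q) := by simp [Fintype.sum_prod_type]
    _ = ∑ p, single p p M.trace :=
      Finset.sum_congr rfl fun p _ => (map_sum (singleAddMonoidHom (α := R) p p) _ _).symm
    _ = M.trace • 1 := by rw [sum_single_eq_diagonal, smul_one_eq_diagonal]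

theorem sum_prod_single (M : Matrix n n R) : ∑ x : n × n, single x.1 x.2 (M x.1 x.2) = M := by
  rw [Fintype.sum_prod_type, sum_sum_single]
  rfl

theorem exists_isSeparableFrobeniusBasis :
    ∃ e, IsSeparableFrobeniusBasis (traceLinearMap n R R) (fun x : n × n => single x.1 x.2 (1 : R))
      (fun x => single x.2 x.1 1) e := by
  obtain hn | ⟨⟨p⟩⟩ := isEmpty_or_nonempty n
  · exact ⟨0, fun b => Subsingleton.elim _ _, fun b => Subsingleton.elim _ _, Subsingleton.elim _ _⟩
  refine ⟨single p p 1, fun b => ?_, fun b => ?_, ?_⟩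
  · simpa [trace_mul_single] using
      ((Equiv.prodComm n n).sum_comp fun x => single x.1 x.2 (b x.1 x.2)).trans (sum_prod_single b)
  · simpa [trace_single_mul] using sum_prod_single b
  · rw [sum_single_mul_mul_single, trace_single_eq_same, one_smul]

end Matrix

theorem Subalgebra.map_centralizer {R A B : Type*} [CommSemiring R] [Semiring A] [Algebra R A]
    [Semiring B] [Algebra R B] (φ : A ≃ₐ[R] B) (s : Set A) :
    (Subalgebra.centralizer R s).map (φ : A →ₐ[R] B) = Subalgebra.centralizer R (φ '' s) := by
  ext y
  simp only [Subalgebra.mem_map, Subalgebra.mem_centralizer_iff, Set.forall_mem_image]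
  constructor
  · rintro ⟨x, hx, rfl⟩ a ha
    simp [← map_mul, hx a ha]
  · intro hy
    refine ⟨φ.symm y, fun a ha => φ.injective ?_, φ.apply_symm_apply y⟩
    simpa using hy ha

noncomputable def AlgEquiv.centralizerCongr {R A B : Type*} [CommSemiring R] [Semiring A]
    [Algebra R A] [Semiring B] [Algebra R B] (φ : A ≃ₐ[R] B) {a : A} {b : B} (h : φ a = b) :
    Subalgebra.centralizer R {a} ≃ₐ[R] Subalgebra.centralizer R {b} :=
  (φ.subalgebraMap _).trans <| Subalgebra.equivOfEq _ _ <| by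
    rw [Subalgebra.map_centralizer, Set.image_singleton, h]

namespace Matrix

theorem commute_diagonal_iff {R n : Type*} [CommRing R] [NoZeroDivisors R] [Fintype n]
    [DecidableEq n] {d : n → R} {x : Matrix n n R} :
    Commute (diagonal d) x ↔ ∀ p q, d p ≠ d q → x p q = 0 := by
  simp only [commute_iff_eq, ← Matrix.ext_iff, diagonal_mul, mul_diagonal]
  refine forall₂_congr fun p q => ?_
  rw [mul_comm (d p), ← sub_eq_zero, ← mul_sub, mul_eq_zero, sub_eq_zero, or_iff_not_imp_right]

variable {R ι : Type*} [Fintype ι] [DecidableEq ι] {κ : ι → Type*} [∀ i, Fintype (κ i)]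
  [∀ i, DecidableEq (κ i)]

def blockDiagonal'AlgHom [CommSemiring R] :
    (∀ i, Matrix (κ i) (κ i) R) →ₐ[R] Matrix (Σ i, κ i) (Σ i, κ i) R :=
  AlgHom.mk' (blockDiagonal'RingHom κ R) blockDiagonal'_smul

theorem mem_range_blockDiagonal'AlgHom_iff [CommSemiring R]
    {x : Matrix (Σ i, κ i) (Σ i, κ i) R} :
    x ∈ (blockDiagonal'AlgHom (R := R)).range ↔ ∀ a b : Σ i, κ i, a.1 ≠ b.1 → x a b = 0 := by
  constructor
  · rintro ⟨M, rfl⟩ ⟨i, a⟩ ⟨j, b⟩ hij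
    exact blockDiagonal'_apply_ne M a b hij
  · intro hx
    refine ⟨fun i a b => x ⟨i, a⟩ ⟨i, b⟩, ?_⟩
    ext ⟨i, a⟩ ⟨j, b⟩
    by_cases hij : i = j
    · subst hij
      exact blockDiagonal'_apply_eq (fun i a b => x ⟨i, a⟩ ⟨i, b⟩) i a b
    · exact (blockDiagonal'_apply_ne (fun i a b => x ⟨i, a⟩ ⟨i, b⟩) a b hij).trans
        (hx ⟨i, a⟩ ⟨j, b⟩ hij).symm

theorem range_blockDiagonal'AlgHom [CommRing R] [NoZeroDivisors R] {lam : ι → R}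
    (hlam : Function.Injective lam) :
    (blockDiagonal'AlgHom (R := R) (κ := κ)).range =
      Subalgebra.centralizer R {diagonal fun a => lam a.1} := by
  ext x
  simp only [mem_range_blockDiagonal'AlgHom_iff, Subalgebra.mem_centralizer_iff,
    Set.mem_singleton_iff, forall_eq, ← commute_iff_eq, commute_diagonal_iff, hlam.ne_iff]

noncomputable def centralizerDiagonalEquivPi [CommRing R] [NoZeroDivisors R] {lam : ι → R}
    (hlam : Function.Injective lam) :
    Subalgebra.centralizer R {diagonal fun a : Σ i, κ i => lam a.1} ≃ₐ[R]
      ∀ i, Matrix (κ i) (κ i) R :=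
  ((AlgEquiv.ofInjective _ blockDiagonal'_injective).trans
    (Subalgebra.equivOfEq _ _ (range_blockDiagonal'AlgHom hlam))).symm

end Matrix

theorem exists_sigma_equiv_of_card_fiber {n ι : Type*} [Fintype n] [DecidableEq ι] (g : n → ι)
    (m : ι → ℕ) (h : ∀ i, Fintype.card {p // g p = i} = m i) :
    ∃ σ : (Σ i, Fin (m i)) ≃ n, ∀ x, g (σ x) = x.1 :=
  ⟨(Equiv.sigmaCongrRight fun i => (Fintype.equivFinOfCardEq (h i)).symm).trans
    (Equiv.sigmaFiberEquiv g), fun x => ((Fintype.equivFinOfCardEq (h x.1)).symm x.2).2⟩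

theorem stmt_17_general (R : Type*) [Field R] [DecidableEq R] (n k : ℕ)
    (c : Matrix (Fin n) (Fin n) R) (lam : Fin k → R) (mult : Fin k → ℕ)
    (hlam : Function.Injective lam)
    (hdiag : ∃ (u v : Matrix (Fin n) (Fin n) R) (d : Fin n → R),
      u * v = 1 ∧ v * u = 1 ∧
      c = v * Matrix.diagonal d * u ∧
      (∀ p : Fin n, ∃ i : Fin k, d p = lam i) ∧
      (∀ i : Fin k, (Finset.univ.filter (fun p : Fin n => d p = lam i)).card = mult i)) :
    Nonempty ((Subalgebra.centralizer R {c}) ≃ₐ[R]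
        (∀ i : Fin k, Matrix (Fin (mult i)) (Fin (mult i)) R)) ∧
    ∃ (t : ℕ) (E : Subalgebra.centralizer R {c} →ₗ[R] R)
      (X Y : Fin t → Subalgebra.centralizer R {c})
      (e : Subalgebra.centralizer R {c}),
      (∀ b : Subalgebra.centralizer R {c},
        (∑ i : Fin t, E (b * X i) • Y i = b) ∧
        (∑ i : Fin t, E (Y i * b) • X i = b)) ∧
      ∑ i : Fin t, X i * e * Y i = 1 := by
  obtain ⟨u, v, d, huv, hvu, rfl, hd, hcard⟩ := hdiag
  choose g hg using hd
  obtain ⟨σ, hσ⟩ := exists_sigma_equiv_of_card_fiber g mult fun i => by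
    rw [Fintype.card_subtype, ← hcard i]
    simp_rw [hg, hlam.eq_iff]
  let U : (Matrix (Fin n) (Fin n) R)ˣ := ⟨u, v, huv, hvu⟩
  have hconj : ((MulSemiringAction.toAlgEquiv R _ (ConjAct.toConjAct U)).trans
      (reindexAlgEquiv R R σ.symm)) (v * diagonal d * u) = diagonal fun a => lam a.1 := by
    have hU : u * (v * diagonal d * u) * v = diagonal d := by
      simp only [← mul_assoc, huv, one_mul]
      rw [mul_assoc, huv, mul_one]
    rw [AlgEquiv.trans_apply, MulSemiringAction.toAlgEquiv_apply, ConjAct.units_smul_def]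
    change reindex σ.symm σ.symm (u * (v * diagonal d * u) * v) = _
    rw [hU, reindex_apply, Equiv.symm_symm, submatrix_diagonal_equiv]
    simp only [Function.comp_def, hg, hσ]
  let φ := (AlgEquiv.centralizerCongr _ hconj).trans (centralizerDiagonalEquivPi hlam)
  choose e he using fun i => exists_isSeparableFrobeniusBasis (R := R) (n := Fin (mult i))
  have hS := ((IsSeparableFrobeniusBasis.pi he).comap φ).reindex (Fintype.equivFin _).symm
  exact ⟨⟨φ⟩, _, _, _, _, _, fun b => ⟨hS.sum_left b, hS.sum_right b⟩, hS.sum_mul_mul⟩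

set_option synthInstance.maxHeartbeats 1000000 in
/-- If `c ∈ M_n(R)` is diagonalizable over the field `R` with distinct eigenvalues
`λ_1,…,λ_k` of multiplicities `m_1,…,m_k` (each invertible in `R`), then
`S_n(c,R) ≅ M_{m_1}(R) × ⋯ × M_{m_k}(R)`, and `S_n(c,R)/R` is a separable Frobenius
extension. -/
theorem stmt_17 (R : Type*) [Field R] [DecidableEq R] (n k : ℕ)
    (c : Matrix (Fin n) (Fin n) R) (lam : Fin k → R) (mult : Fin k → ℕ)
    (hlam : Function.Injective lam)
    (hdiag : ∃ (u v : Matrix (Fin n) (Fin n) R) (d : Fin n → R),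
      u * v = 1 ∧ v * u = 1 ∧
      c = v * Matrix.diagonal d * u ∧
      (∀ p : Fin n, ∃ i : Fin k, d p = lam i) ∧
      (∀ i : Fin k, (Finset.univ.filter (fun p : Fin n => d p = lam i)).card = mult i))
    (hmult : ∀ i : Fin k, IsUnit ((mult i : ℕ) : R)) :
    Nonempty ((Subalgebra.centralizer R {c}) ≃ₐ[R]
        (∀ i : Fin k, Matrix (Fin (mult i)) (Fin (mult i)) R)) ∧
    ∃ (t : ℕ) (E : Subalgebra.centralizer R {c} →ₗ[R] R)
      (X Y : Fin t → Subalgebra.centralizer R {c})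
      (e : Subalgebra.centralizer R {c}),
      (∀ b : Subalgebra.centralizer R {c},
        (∑ i : Fin t, E (b * X i) • Y i = b) ∧
        (∑ i : Fin t, E (Y i * b) • X i = b)) ∧
      ∑ i : Fin t, X i * e * Y i = 1 :=
  stmt_17_general R n k c lam mult hlam hdiag
end
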